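/- Let A, B as above and C = !![0, -I; I, 0], ψ = (1/√2) • ![1,1], ρ = |ψ⟩⟨ψ|. With superoperators 𝒜(ρ)={A,ρ}/2 etc., one has Tr(ρ·𝒜(𝒝(𝒞(1)))) = 1/2 and Tr(ρ·𝒝(𝒜(𝒞(1)))) = -1/2. -/

import Mathlib

open Complex Matrix

noncomputable def Aobs : Matrix (Fin 2) (Fin 2) ℂ :=
  !![0, Complex.exp (Complex.I * Real.pi / 4);
     Complex.exp (-(Complex.I * Real.pi / 4)), 0]

noncomputable def Bobs : Matrix (Fin 2) (Fin 2) ℂ :=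
  !![0, Complex.exp (-(Complex.I * Real.pi / 4));
     Complex.exp (Complex.I * Real.pi / 4), 0]

noncomputable def Cobs : Matrix (Fin 2) (Fin 2) ℂ := !![0, -Complex.I; Complex.I, 0]

noncomputable def ψ : Fin 2 → ℂ := (1 / (Real.sqrt 2 : ℂ)) • ![1, 1]

noncomputable def ρ0 : Matrix (Fin 2) (Fin 2) ℂ := Matrix.vecMulVec ψ (star ψ)

noncomputable def sop (M σ : Matrix (Fin 2) (Fin 2) ℂ) : Matrix (Fin 2) (Fin 2) ℂ :=
  (1 / 2 : ℂ) • (M * σ + σ * M)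

/-! Two off-diagonal `2 × 2` matrices anticommute to a scalar. With
`U θ = !![0, e^{iθ}; e^{-iθ}, 0]` we have `A = U (π/4)`, `B = U (-π/4)`, `{U φ, C}/2 = -sin φ • 1`
and `⟨ψ| U θ |ψ⟩ = cos θ`, so `Tr(ρ · 𝒰_θ(𝒰_φ(𝒞(1)))) = -cos θ sin φ`, which is odd in `φ`. -/

lemma sop_one_right (M : Matrix (Fin 2) (Fin 2) ℂ) : sop M 1 = M := by
  rw [sop, mul_one, one_mul, ← two_smul ℂ M, smul_smul]
  norm_num

lemma sop_smul_right (M N : Matrix (Fin 2) (Fin 2) ℂ) (c : ℂ) : sop M (c • N) = c • sop M N := by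
  simp only [sop, Matrix.mul_smul, Matrix.smul_mul]
  module

lemma sop_offDiag (a b c d : ℂ) :
    sop !![0, a; b, 0] !![0, c; d, 0] = ((a * d + b * c) / 2) • (1 : Matrix (Fin 2) (Fin 2) ℂ) := by
  ext i j
  fin_cases i <;> fin_cases j <;> simp [sop] <;> ring

lemma ρ0_apply (i j : Fin 2) : ρ0 i j = 1 / 2 := by
  have hsqrt : ((Real.sqrt 2 : ℂ))⁻¹ * (Real.sqrt 2 : ℂ)⁻¹ = 2⁻¹ := by
    rw [← mul_inv, ← ofReal_mul, Real.mul_self_sqrt zero_le_two, ofReal_ofNat]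
  fin_cases i <;> fin_cases j <;> simpa [ρ0, ψ, vecMulVec_apply] using hsqrt

lemma trace_ρ0_mul (M : Matrix (Fin 2) (Fin 2) ℂ) :
    (ρ0 * M).trace = (M 0 0 + M 0 1 + M 1 0 + M 1 1) / 2 := by
  simp only [trace_fin_two, mul_apply, Fin.sum_univ_two, ρ0_apply]
  ring

noncomputable def offDiagPhase (θ : ℝ) : Matrix (Fin 2) (Fin 2) ℂ :=
  !![0, exp (θ * I); exp (-(θ * I)), 0]

lemma Aobs_eq_offDiagPhase : Aobs = offDiagPhase (Real.pi / 4) := by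
  rw [Aobs, offDiagPhase]; push_cast; ring_nf

lemma Bobs_eq_offDiagPhase : Bobs = offDiagPhase (-(Real.pi / 4)) := by
  rw [Bobs, offDiagPhase]; push_cast; ring_nf

lemma trace_ρ0_mul_offDiagPhase (θ : ℝ) : (ρ0 * offDiagPhase θ).trace = Real.cos θ := by
  rw [trace_ρ0_mul, ofReal_cos, ← mul_div_cancel_left₀ (cos (θ : ℂ)) two_ne_zero, two_cos]
  simp [offDiagPhase]

lemma sop_offDiagPhase_Cobs (θ : ℝ) : sop (offDiagPhase θ) Cobs = (-Real.sin θ : ℂ) • 1 := by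
  rw [offDiagPhase, Cobs, sop_offDiag, ofReal_sin]
  have h := two_sin (θ : ℂ)
  rw [neg_mul] at h
  congr 1
  linear_combination (1 / 2) * h

lemma trace_ρ0_mul_sop_sop_Cobs (θ φ : ℝ) :
    (ρ0 * sop (offDiagPhase θ) (sop (offDiagPhase φ) (sop Cobs 1))).trace
      = ((-(Real.cos θ * Real.sin φ) : ℝ) : ℂ) := by
  rw [sop_one_right, sop_offDiagPhase_Cobs, sop_smul_right, sop_one_right, Matrix.mul_smul, trace_smul,
    trace_ρ0_mul_offDiagPhase, smul_eq_mul]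
  push_cast; ring

lemma cos_mul_sin_pi_div_four : Real.cos (Real.pi / 4) * Real.sin (Real.pi / 4) = 1 / 2 := by
  rw [Real.cos_pi_div_four, Real.sin_pi_div_four, div_mul_div_comm,
    Real.mul_self_sqrt zero_le_two]
  norm_num

theorem time_order_violation_values :
    (ρ0 * sop Aobs (sop Bobs (sop Cobs 1))).trace = 1 / 2 ∧
    (ρ0 * sop Bobs (sop Aobs (sop Cobs 1))).trace = -(1 / 2) := by
  rw [Aobs_eq_offDiagPhase, Bobs_eq_offDiagPhase, trace_ρ0_mul_sop_sop_Cobs,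
    trace_ρ0_mul_sop_sop_Cobs, Real.cos_neg, Real.sin_neg, mul_neg, neg_neg,
    cos_mul_sin_pi_div_four]
  constructor <;> push_cast <;> rfl
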